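/- arXiv:1006.1436 — 5 statements merged into one kernel-verified Lean document; each statement's English description precedes it below -/
import Mathlib

section
/- Every Borel-closed set of monomials has a unique minimal set of Borel generators, namely the set of minimal elements of its minimal monomial generating set under the Borel order. Concretely: if B is a finite antichain (under divisibility) of monomials generating a monomial ideal closed under Borel moves, then the set T of Borel-order-minimal elements of B satisfies Borel(T) = Borel(B), and for any m in T and any subset T' of B not containing m, m is not in Borel(T'). -/
/-- Borel order: `m1` precedes `m2`. -/
def BorelLe (m1 m2 : Multiset ℕ) : Prop :=
  Multiset.card m2 ≤ Multiset.card m1 ∧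
    ∀ j < Multiset.card m2,
      (m1.sort (· ≤ ·)).getD j 0 ≤ (m2.sort (· ≤ ·)).getD j 0

/-- The monomials of the smallest Borel-closed ideal containing `T`:
those divisible by some monomial preceding an element of `T` in the Borel order. -/
def BorelIdeal (T : Set (Multiset ℕ)) : Set (Multiset ℕ) :=
  {u | ∃ m ∈ T, ∃ v, BorelLe v m ∧ v ≤ u}

/-- A set of monomials is Borel-closed if it is closed upward under
divisibility and closed under Borel moves (replacing `x_j` by `x_i`, `i < j`). -/
def BorelClosed (B : Set (Multiset ℕ)) : Prop :=
  (∀ m ∈ B, ∀ u : Multiset ℕ, m ≤ u → u ∈ B) ∧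
  (∀ m ∈ B, ∀ i j : ℕ, j ∈ m → i < j → (i ::ₘ m.erase j) ∈ B)

/-!
Divisibility refines the Borel order (if `v ∣ u` then `u` precedes `v`), so `Borel(T)` consists
exactly of the monomials preceding some element of `T`, and `Borel(T) ⊆ Borel(T')` holds iff every
element of `T` precedes an element of `T'`. The Borel order is a partial order, so in the finite
set `B` every element precedes a Borel-minimal one, which gives `Borel(T) = Borel(B)`. If a minimal
`m` lay in `Borel(T')` for some `T' ⊆ B`, it would precede an element of `T'`, which by minimality
is `m` itself.
-/

theorem List.Sublist.getD_le_getD_of_sortedLE {α : Type*} [Preorder α] {l₁ l₂ : List α}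
    (h : l₁.Sublist l₂) (hl₂ : l₂.SortedLE) (d : α) {j : ℕ} (hj : j < l₁.length) :
    l₂.getD j d ≤ l₁.getD j d := by
  obtain ⟨f, hf⟩ := List.sublist_iff_exists_orderEmbedding_getElem?_eq.1 h
  obtain ⟨hfj, hget⟩ :=
    List.getElem?_eq_some_iff.1 ((hf j).symm.trans (List.getElem?_eq_getElem hj))
  have hjf : j ≤ f j := f.strictMono.le_apply
  rw [List.getD_eq_getElem _ _ hj, List.getD_eq_getElem _ _ (hjf.trans_lt hfj), ← hget]
  exact hl₂.getElem_le_getElem_of_le hjf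

theorem BorelLe.refl (m : Multiset ℕ) : BorelLe m m :=
  ⟨le_rfl, fun _ _ => le_rfl⟩

theorem BorelLe.trans {a b c : Multiset ℕ} (hab : BorelLe a b) (hbc : BorelLe b c) :
    BorelLe a c :=
  ⟨hbc.1.trans hab.1, fun j hj => (hab.2 j (hj.trans_le hbc.1)).trans (hbc.2 j hj)⟩

theorem BorelLe.antisymm {a b : Multiset ℕ} (hab : BorelLe a b) (hba : BorelLe b a) : a = b := by
  have hcard : Multiset.card a = Multiset.card b := le_antisymm hba.1 hab.1
  have hsort : a.sort (· ≤ ·) = b.sort (· ≤ ·) := by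
    refine List.ext_getElem (by simp [hcard]) fun j ha hb => ?_
    have hj : j < Multiset.card b := by simpa using hb
    have := le_antisymm (hab.2 j hj) (hba.2 j (hcard ▸ hj))
    rwa [List.getD_eq_getElem _ _ ha, List.getD_eq_getElem _ _ hb] at this
  simpa using congrArg ((↑) : List ℕ → Multiset ℕ) hsort

-- The Borel-minimal generators of the paper are the maximal elements of this order.
def BorelOrder : Type := Multiset ℕ

instance : PartialOrder BorelOrder where
  le := BorelLe
  le_refl := BorelLe.refl
  le_trans _ _ _ := BorelLe.trans
  le_antisymm _ _ := BorelLe.antisymm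

theorem exists_borelLe_borelMinimal (B : Finset (Multiset ℕ)) {m : Multiset ℕ} (hm : m ∈ B) :
    ∃ m' ∈ B, BorelLe m m' ∧ ∀ m'' ∈ B, BorelLe m' m'' → m' = m'' := by
  obtain ⟨m', hmm', hm', hmax⟩ := Finset.exists_le_maximal (α := BorelOrder) B hm
  exact ⟨m', hm', hmm', fun m'' hm'' h => h.antisymm (hmax hm'' h)⟩

theorem borelLe_of_le {u v : Multiset ℕ} (h : v ≤ u) : BorelLe u v := by
  have hsorted (m : Multiset ℕ) : (m.sort (· ≤ ·)).SortedLE := (Multiset.pairwise_sort _ _).sortedLE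
  have hsub : (v.sort (· ≤ ·)).Sublist (u.sort (· ≤ ·)) := by
    refine List.sublist_of_subperm_of_sortedLE ?_ (hsorted v) (hsorted u)
    rwa [← Multiset.coe_le, Multiset.sort_eq, Multiset.sort_eq]
  exact ⟨Multiset.card_le_card h, fun j hj =>
    hsub.getD_le_getD_of_sortedLE (hsorted u) 0 (by rwa [Multiset.length_sort])⟩

theorem exists_borelLe_of_mem_borelIdeal {T : Set (Multiset ℕ)} {u : Multiset ℕ}
    (hu : u ∈ BorelIdeal T) : ∃ m ∈ T, BorelLe u m := by
  obtain ⟨m, hm, v, hvm, hvu⟩ := hu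
  exact ⟨m, hm, (borelLe_of_le hvu).trans hvm⟩

theorem borelIdeal_subset_borelIdeal_iff {T T' : Set (Multiset ℕ)} :
    BorelIdeal T ⊆ BorelIdeal T' ↔ ∀ m ∈ T, ∃ m' ∈ T', BorelLe m m' := by
  refine ⟨fun h m hm => exists_borelLe_of_mem_borelIdeal (h ⟨m, hm, m, .refl m, le_rfl⟩), ?_⟩
  rintro h u ⟨m, hm, v, hvm, hvu⟩
  obtain ⟨m', hm', hmm'⟩ := h m hm
  exact ⟨m', hm', v, hvm.trans hmm', hvu⟩

theorem unique_minimal_borel_generators_general (B : Finset (Multiset ℕ)) :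
    BorelIdeal {m | m ∈ B ∧ ∀ m' ∈ B, BorelLe m m' → m = m'} = BorelIdeal ↑B ∧
    ∀ m ∈ B, (∀ m' ∈ B, BorelLe m m' → m = m') →
      ∀ T' : Set (Multiset ℕ), T' ⊆ ↑B → m ∉ T' → m ∉ BorelIdeal T' := by
  refine ⟨?_, fun m _ hmin T' hT' hmT' hm => ?_⟩
  · refine (borelIdeal_subset_borelIdeal_iff.2 fun m hm => ⟨m, hm.1, .refl m⟩).antisymm
      (borelIdeal_subset_borelIdeal_iff.2 fun m hm => ?_)
    obtain ⟨m', hm', hmm', hmin'⟩ := exists_borelLe_borelMinimal B hm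
    exact ⟨m', ⟨hm', hmin'⟩, hmm'⟩
  · obtain ⟨m', hm', hmm'⟩ := exists_borelLe_of_mem_borelIdeal hm
    exact hmT' (hmin m' (hT' hm') hmm' ▸ hm')

/-- Every Borel ideal has a unique minimal set of Borel generators: if `B` is a
finite antichain under divisibility generating a Borel-closed ideal, then the
set `T` of Borel-order-minimal elements of `B` satisfies
`Borel(T) = Borel(B)`, and no `m ∈ T` lies in `Borel(T')` for any
`T' ⊆ B` with `m ∉ T'`. -/
theorem unique_minimal_borel_generators (B : Finset (Multiset ℕ))
    (hanti : ∀ a ∈ B, ∀ b ∈ B, a ≤ b → a = b)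
    (hclosed : BorelClosed (BorelIdeal ↑B)) :
    BorelIdeal {m | m ∈ B ∧ ∀ m' ∈ B, BorelLe m m' → m = m'} = BorelIdeal ↑B ∧
    ∀ m ∈ B, (∀ m' ∈ B, BorelLe m m' → m = m') →
      ∀ T' : Set (Multiset ℕ), T' ⊆ ↑B → m ∉ T' → m ∉ BorelIdeal T' :=
  unique_minimal_borel_generators_general B
end

section
/- A monomial u belongs to the principal Borel ideal Borel(m) if and only if u is divisible by some monomial that precedes m in the Borel order. Equivalently, writing m = x_{i_1}⋯x_{i_s} in weakly increasing factorization: u ∈ Borel(m) if and only if for every 1 ≤ j ≤ s, u is divisible by at least j variables (counted with multiplicity) of index at most i_j. -/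
/-- `u` is in the principal Borel ideal `Borel(m)`: `u` is divisible by some
monomial preceding `m` in the Borel order. -/
def BorelMem (m u : Multiset ℕ) : Prop := ∃ v, BorelLe v m ∧ v ≤ u

theorem List.Pairwise.getElem_le_iff_lt_length_filter {α : Type*} [LinearOrder α] {l : List α}
    (hl : l.Pairwise (· ≤ ·)) {j : ℕ} (hj : j < l.length) (a : α) :
    l[j] ≤ a ↔ j < (l.filter (· ≤ a)).length := by
  induction l generalizing j with
  | nil => simp at hj
  | cons x t ih =>
    rw [List.pairwise_cons] at hl
    by_cases hx : x ≤ a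
    · cases j with
      | zero => simp [hx]
      | succ j => simp [hx, ih hl.2 (by simpa using hj)]
    · have hgt : ∀ y ∈ x :: t, ¬ y ≤ a := by
        simp only [List.mem_cons, forall_eq_or_imp]
        exact ⟨hx, fun y hy hya => hx ((hl.1 y hy).trans hya)⟩
      rw [List.filter_eq_nil_iff.mpr fun y hy => by simpa using hgt y hy]
      simpa using hgt _ (List.getElem_mem hj)

namespace Multiset

variable {α : Type*} [LinearOrder α]

theorem card_filter_le_eq_length_filter_sort (s : Multiset α) (a : α) :
    card (s.filter (· ≤ a)) = ((s.sort (· ≤ ·)).filter (· ≤ a)).length := by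
  conv_lhs => rw [← sort_eq s (· ≤ ·)]
  rw [filter_coe, coe_card]

theorem sort_getD_le_iff {s : Multiset α} {j : ℕ} (hj : j < card s) (d a : α) :
    (s.sort (· ≤ ·)).getD j d ≤ a ↔ j < card (s.filter (· ≤ a)) := by
  rw [← length_sort (· ≤ ·)] at hj
  rw [List.getD_eq_getElem _ d hj, card_filter_le_eq_length_filter_sort]
  exact (pairwise_sort s _).getElem_le_iff_lt_length_filter hj a

theorem sort_coe_take_sort (s : Multiset α) (n : ℕ) :
    (((s.sort (· ≤ ·)).take n : List α) : Multiset α).sort (· ≤ ·) = (s.sort (· ≤ ·)).take n :=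
  (coe_sort _ _).trans <| List.mergeSort_eq_self _ <|
    (pairwise_sort s _).sublist (List.take_sublist _ _)

end Multiset

theorem mem_principal_borel_iff_general (m u : Multiset ℕ) :
    BorelMem m u ↔
      ∀ j < Multiset.card m,
        j + 1 ≤ Multiset.card (u.filter (fun x => x ≤ (m.sort (· ≤ ·)).getD j 0)) := by
  open Multiset in
  constructor
  · rintro ⟨v, ⟨hcard, hle⟩, hvu⟩ j hj
    have hv := (sort_getD_le_iff (hj.trans_le hcard) 0 _).mp (hle j hj)
    exact hv.trans_le (card_le_card (filter_le_filter _ hvu))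
  · intro h
    have hmu : card m ≤ card u := by
      rcases (card m).eq_zero_or_pos with h0 | hpos
      · simp [h0]
      · have hlast := h (card m - 1) (by omega)
        have hfilter := card_le_card (filter_le (· ≤ (m.sort (· ≤ ·)).getD (card m - 1) 0) u)
        omega
    let v : Multiset ℕ := (u.sort (· ≤ ·)).take (card m)
    refine ⟨v, ⟨by simp [v, hmu], fun j hj => ?_⟩, ?_⟩
    · rw [sort_coe_take_sort, List.getD_eq_getElem?_getD, List.getElem?_take_of_lt hj,
        ← List.getD_eq_getElem?_getD]
      exact (sort_getD_le_iff (hj.trans_le hmu) 0 _).mpr (h j hj)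
    · rw [← sort_eq u (· ≤ ·), coe_le]
      exact (List.take_sublist _ _).subperm

/-- `u ∈ Borel(m)` iff for every `1 ≤ j ≤ deg m`, `u` is divisible by at least
`j` variables (with multiplicity) of index at most `i_j`, where
`m = x_{i_1}⋯x_{i_s}` is the weakly increasing factorization. -/
theorem mem_principal_borel_iff (m u : Multiset ℕ)
    (hm : ∀ x ∈ m, 1 ≤ x) (hu : ∀ x ∈ u, 1 ≤ x) :
    BorelMem m u ↔
      ∀ j < Multiset.card m,
        j + 1 ≤ Multiset.card (u.filter (fun x => x ≤ (m.sort (· ≤ ·)).getD j 0)) :=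
  mem_principal_borel_iff_general m u
end

section
/- Let m = x_{i_1}x_{i_2}⋯x_{i_s} be a squarefree monomial with i_1 < i_2 < ⋯ < i_s, and let B = sfBorel(m) be the squarefree Borel ideal it generates. Then a set of variables V ⊆ {x_1,…,x_n} meets the support of every squarefree monomial in sfBorel(m) if and only if V contains the support of some squarefree monomial in sfBorel(x_1⋯x_{i_1}, x_2⋯x_{i_2}, …, x_s⋯x_{i_s}). -/
/-- Membership in the principal squarefree Borel ideal: the squarefree monomial
`u` (a finite set of variable indices) lies in `sfBorel(m)` iff for each
`j ≤ |m|`, `u` contains at least `j` variables of index at most `i_j`, where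
`i_1 < i_2 < ⋯` are the indices of `m`. -/
def SfBorelMem (m u : Finset ℕ) : Prop :=
  ∀ j < m.card, j + 1 ≤ (u.filter (fun x => x ≤ (m.sort (· ≤ ·)).getD j 0)).card

lemma sort_Icc_eq (a b : ℕ) :
    (Finset.Icc a b).sort (· ≤ ·) = List.range' a (b + 1 - a) := by
  refine List.Perm.eq_of_pairwise (fun _ _ _ _ h1 h2 => le_antisymm h1 h2) (Finset.pairwise_sort _ _)
    (List.Pairwise.imp le_of_lt (List.pairwise_lt_range' (s := a) (n := b+1-a))) ?_
  rw [← Multiset.coe_eq_coe, Finset.sort_eq, Nat.Icc_eq_range']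

lemma getD_sort_Icc (a b k : ℕ) (h : k < b + 1 - a) :
    ((Finset.Icc a b).sort (· ≤ ·)).getD k 0 = a + k := by
  rw [sort_Icc_eq, List.getD_eq_getElem, List.getElem_range']
  omega
  simpa using h

lemma getD_sort_mem (m : Finset ℕ) {j : ℕ} (hj : j < m.card) :
    (m.sort (· ≤ ·)).getD j 0 ∈ m := by
  rw [List.getD_eq_getElem _ _ (by simpa using hj)]
  exact (Finset.mem_sort _).1 (List.getElem_mem _)

lemma le_getD_sort (m : Finset ℕ) (hm1 : ∀ x ∈ m, 1 ≤ x) :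
    ∀ j < m.card, j + 1 ≤ (m.sort (· ≤ ·)).getD j 0 := by
  intro j
  induction j with
  | zero => intro h; exact hm1 _ (getD_sort_mem m h)
  | succ j ih =>
    intro h
    have h' : j < m.card := by omega
    have hih := ih h'
    have hs := (Finset.sortedLT_sort m).pairwise
    have hlen : j + 1 < (m.sort (· ≤ ·)).length := by simpa using h
    have hlt : (m.sort (· ≤ ·)).getD j 0 < (m.sort (· ≤ ·)).getD (j+1) 0 := by
      rw [List.getD_eq_getElem _ _ (by omega), List.getD_eq_getElem _ _ hlen]
      exact (List.pairwise_iff_getElem.1 hs) j (j+1) (by omega) hlen (by omega)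
    omega

lemma rhs_char (V : Finset ℕ) (j i : ℕ) :
    (∃ μ : Finset ℕ, SfBorelMem (Finset.Icc (j+1) i) μ ∧ μ ⊆ V) ↔
      ∀ t, j + 1 ≤ t → t ≤ i → t - j ≤ (V.filter (fun x => x ≤ t)).card := by
  constructor
  · rintro ⟨μ, hμ, hsub⟩ t ht1 ht2
    have hk : t - (j+1) < (Finset.Icc (j+1) i).card := by rw [Nat.card_Icc]; omega
    have h1 := hμ _ hk
    rw [getD_sort_Icc _ _ _ (by omega)] at h1
    have ht : j + 1 + (t - (j+1)) = t := by omega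
    rw [ht] at h1
    have h2 := Finset.card_le_card (Finset.filter_subset_filter (fun x => x ≤ t) hsub)
    omega
  · intro h
    refine ⟨V.filter (fun x => x ≤ i), ?_, Finset.filter_subset _ _⟩
    intro k hk
    rw [Nat.card_Icc] at hk
    rw [getD_sort_Icc _ _ _ (by omega)]
    have h1 := h (j+1+k) (by omega) (by omega)
    have hss : V.filter (fun x => x ≤ j+1+k) ⊆
        (V.filter (fun x => x ≤ i)).filter (fun x => x ≤ j+1+k) := by
      intro x hx
      simp only [Finset.mem_filter] at *
      exact ⟨⟨hx.1, by omega⟩, hx.2⟩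
    have h2 := Finset.card_le_card hss
    omega

/-- Alexander duality for principal squarefree Borel ideals: a set of variables
`V` meets the support of every squarefree monomial of `sfBorel(m)` iff `V`
contains the support of some squarefree monomial in
`sfBorel(x_1⋯x_{i_1}, x_2⋯x_{i_2}, …, x_s⋯x_{i_s})` (the union of the
principal squarefree Borel ideals of the interval monomials). -/
theorem sf_alexander_dual (n : ℕ) (m : Finset ℕ) (hm : m ⊆ Finset.Icc 1 n)
    (V : Finset ℕ) (hV : V ⊆ Finset.Icc 1 n) :
    (∀ u : Finset ℕ, u ⊆ Finset.Icc 1 n → SfBorelMem m u → (u ∩ V).Nonempty) ↔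
      ∃ j < m.card, ∃ μ : Finset ℕ,
        SfBorelMem (Finset.Icc (j + 1) ((m.sort (· ≤ ·)).getD j 0)) μ ∧ μ ⊆ V := by
  have hm1 : ∀ x ∈ m, 1 ≤ x := fun x hx => (Finset.mem_Icc.1 (hm hx)).1
  have hmn : ∀ x ∈ m, x ≤ n := fun x hx => (Finset.mem_Icc.1 (hm hx)).2
  constructor
  · intro h
    by_contra hc
    push_neg at hc
    set u : Finset ℕ := (Finset.Icc 1 n) \ V with hu
    have hdisj : u ∩ V = ∅ := by
      ext x
      simp only [Finset.mem_inter, Finset.mem_sdiff, Finset.notMem_empty, iff_false, hu]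
      tauto
    have hum : SfBorelMem m u := by
      intro j hj
      set i := (m.sort (· ≤ ·)).getD j 0 with hi
      have hji : j + 1 ≤ i := le_getD_sort m hm1 j hj
      have hin : i ≤ n := hmn _ (getD_sort_mem m hj)
      have hnall : ¬ ∀ t, j+1 ≤ t → t ≤ i → t - j ≤ (V.filter (fun x => x ≤ t)).card := by
        intro hall
        obtain ⟨μ, hP, hQ⟩ := (rhs_char V j i).2 hall
        exact hc j hj μ hP hQ
      push_neg at hnall
      obtain ⟨t, ht1, ht2, ht3⟩ := hnall
      have hsub1 : Finset.Icc 1 t \ V.filter (fun x => x ≤ t) ⊆ u.filter (fun x => x ≤ i) := by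
        intro x hx
        simp only [Finset.mem_sdiff, Finset.mem_filter, Finset.mem_Icc, hu] at *
        refine ⟨⟨⟨hx.1.1, le_trans hx.1.2 (le_trans ht2 hin)⟩, fun hxV => hx.2 ⟨hxV, hx.1.2⟩⟩,
          le_trans hx.1.2 ht2⟩
      have hcard1 : t ≤ (Finset.Icc 1 t \ V.filter (fun x => x ≤ t)).card
          + (V.filter (fun x => x ≤ t)).card := by
        have h2 := Finset.card_le_card_sdiff_add_card (s := Finset.Icc 1 t)
          (t := V.filter (fun x => x ≤ t))
        rw [Nat.card_Icc] at h2
        omega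
      have h3 := Finset.card_le_card hsub1
      omega
    have h4 := h u Finset.sdiff_subset hum
    rw [hdisj] at h4
    exact Finset.not_nonempty_empty h4
  · rintro ⟨j, hj, μ, hμ, hμV⟩ u hu hum
    set i := (m.sort (· ≤ ·)).getD j 0 with hi
    have hji : j + 1 ≤ i := le_getD_sort m hm1 j hj
    have hin : i ≤ n := hmn _ (getD_sort_mem m hj)
    have hV' := (rhs_char V j i).1 ⟨μ, hμ, hμV⟩ i hji le_rfl
    have hA := hum j hj
    rw [← hi] at hA
    by_contra hne
    rw [Finset.not_nonempty_iff_eq_empty] at hne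
    have hdisjAB : Disjoint (u.filter (fun x => x ≤ i)) (V.filter (fun x => x ≤ i)) := by
      rw [Finset.disjoint_left]
      intro x hxu hxv
      have hmem : x ∈ u ∩ V :=
        Finset.mem_inter.2 ⟨(Finset.mem_filter.1 hxu).1, (Finset.mem_filter.1 hxv).1⟩
      rw [hne] at hmem
      exact absurd hmem (Finset.notMem_empty x)
    have hsubU : u.filter (fun x => x ≤ i) ∪ V.filter (fun x => x ≤ i) ⊆ Finset.Icc 1 i := by
      intro x hx
      rcases Finset.mem_union.1 hx with hx | hx
      · rcases Finset.mem_filter.1 hx with ⟨hx1, hx2⟩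
        exact Finset.mem_Icc.2 ⟨(Finset.mem_Icc.1 (hu hx1)).1, hx2⟩
      · rcases Finset.mem_filter.1 hx with ⟨hx1, hx2⟩
        exact Finset.mem_Icc.2 ⟨(Finset.mem_Icc.1 (hV hx1)).1, hx2⟩
    have h5 := Finset.card_le_card hsubU
    rw [Finset.card_union_of_disjoint hdisjAB, Nat.card_Icc] at h5
    omega
end

section
/- Let B = Borel(m) with max(m) = x_k and write w_k(B) for the number of minimal monomial generators of B with maximal variable x_k, and define b_i(B) = Σ_{j=1}^{n} binom(j−1, i)·w_j(B), where w_j(B) counts minimal generators of B with maximal variable x_j. Then for each i ≥ 1, b_{i−1}(Borel(m)) + b_i(Borel(m/x_k)) = binom(k, i)·w_k(Borel(m)). -/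
/-- The minimal monomial generators of the principal Borel ideal whose Borel
generator has weakly increasing factorization `I`: weakly increasing sequences
of positive integers, bounded termwise by `I`. -/
def borelGens (I : List ℕ) : Set (List ℕ) :=
  {l | l.length = I.length ∧ l.Chain' (· ≤ ·) ∧
    ∀ t < l.length, 1 ≤ l.getD t 0 ∧ l.getD t 0 ≤ I.getD t 0}

/-- `w I j`: the number of minimal generators of `Borel(m)` (with factorization
`I`) whose maximal variable is `x_j`. -/
noncomputable def w (I : List ℕ) (j : ℕ) : ℕ :=
  Set.ncard {l ∈ borelGens I | l.getLast? = some j}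

/-- `b n I i`: the `i`-th total Betti number of the principal Borel ideal,
via the Eliahou–Kervaire formula `b_i = Σ_{j=1}^n binom(j-1, i) w_j`. -/
noncomputable def b (n : ℕ) (I : List ℕ) (i : ℕ) : ℕ :=
  ∑ j ∈ Finset.Icc 1 n, Nat.choose (j - 1) i * w I j

/-!
Write `m = m' x_k` and `T_j` for the number of minimal generators of `Borel(m')` whose maximal
variable is at most `x_j`. Stripping the final `x_j` identifies the generators of `Borel(m)` with
maximal variable `x_j ≤ x_k` with those counted by `T_j`, so `w_j(Borel(m)) = T_j`, while
`w_j(Borel(m')) = T_j - T_{j-1}`. By Pascal's rule the sum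
`b_{i-1}(Borel(m)) + b_i(Borel(m'))`
`  = Σ_{j ≤ k} (binom(j-1, i-1) T_j + binom(j-1, i) (T_j - T_{j-1}))`
telescopes to `binom(k, i) T_k = binom(k, i) w_k(Borel(m))`.
-/

open Finset

theorem sum_Icc_choose_mul_add_choose_mul {R : Type*} [CommSemiring R] {T w : ℕ → R}
    (hT : ∀ j, T (j + 1) = T j + w (j + 1)) (r k : ℕ) :
    ∑ j ∈ Icc 1 k, (((j - 1).choose r : R) * T j + ((j - 1).choose (r + 1) : R) * w j) =
      (k.choose (r + 1) : R) * T k := by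
  induction k with
  | zero => simp
  | succ k ih =>
    rw [sum_Icc_succ_top (by omega), ih, Nat.add_sub_cancel, hT, Nat.choose_succ_succ',
      Nat.cast_add]
    ring

theorem mem_borelGens_iff {l I : List ℕ} :
    l ∈ borelGens I ↔ l.IsChain (· ≤ ·) ∧ l.Forall₂ (fun a c => 1 ≤ a ∧ a ≤ c) I := by
  simp only [borelGens, Set.mem_ofPred_eq, List.forall₂_iff_get]
  constructor
  · rintro ⟨hlen, hc, hb⟩
    refine ⟨hc, hlen, fun t h1 h2 => ?_⟩
    simpa [List.getD_eq_getElem, h1, h2] using hb t h1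
  · rintro ⟨hc, hlen, hb⟩
    refine ⟨hlen, hc, fun t h1 => ?_⟩
    simpa [List.getD_eq_getElem, h1, hlen ▸ h1] using hb t h1 (hlen ▸ h1)

theorem borelGens_nil : borelGens [] = {[]} := by
  ext l
  simp only [mem_borelGens_iff, List.forall₂_nil_right_iff, Set.mem_singleton_iff,
    and_iff_right_iff_imp]
  rintro rfl
  exact .nil

theorem append_singleton_mem_borelGens_append_singleton {l I : List ℕ} {j k : ℕ} :
    l ++ [j] ∈ borelGens (I ++ [k]) ↔
      l ∈ borelGens I ∧ (∀ a ∈ l.getLast?, a ≤ j) ∧ 1 ≤ j ∧ j ≤ k := by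
  have hForall₂ {R : ℕ → ℕ → Prop} :
      List.Forall₂ R (l ++ [j]) (I ++ [k]) ↔ List.Forall₂ R l I ∧ R j k := by
    rw [← List.forall₂_reverse_iff]
    simp [and_comm]
  simp only [mem_borelGens_iff, List.isChain_append, hForall₂, List.isChain_singleton,
    List.head?_cons, Option.mem_some_iff, forall_eq', true_and]
  tauto

theorem borelGens_append_singleton_subset (I : List ℕ) (k : ℕ) :
    borelGens (I ++ [k]) ⊆ Set.image2 (fun l j => l ++ [j]) (borelGens I) (Set.Iic k) := by
  intro l hl
  rcases List.eq_nil_or_concat' l with rfl | ⟨l', j, rfl⟩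
  · simp [borelGens] at hl
  · obtain ⟨hl', -, -, hjk⟩ := append_singleton_mem_borelGens_append_singleton.1 hl
    exact ⟨l', hl', j, hjk, rfl⟩

theorem borelGens_finite (I : List ℕ) : (borelGens I).Finite := by
  induction I using List.reverseRecOn with
  | nil => simp [borelGens_nil]
  | append_singleton I k ih =>
    exact ((ih.image2 _ (Set.finite_Iic k)).subset (borelGens_append_singleton_subset I k))

theorem exists_le_of_mem_borelGens {I l : List ℕ} (hl : l ∈ borelGens I) {a : ℕ} (ha : a ∈ l) :
    ∃ c ∈ I, a ≤ c := by
  obtain ⟨t, ht, rfl⟩ := List.getElem_of_mem ha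
  obtain ⟨hlen, -, hb⟩ := hl
  exact ⟨I[t], List.getElem_mem _, by simpa [List.getD_eq_getElem, ht, hlen ▸ ht] using (hb t ht).2⟩

theorem w_eq_zero_of_forall_le {I : List ℕ} {k j : ℕ} (hI : ∀ x ∈ I, x ≤ k) (hj : k < j) :
    w I j = 0 := by
  rw [w, ← Set.ncard_empty (List ℕ)]
  congr 1
  refine Set.eq_empty_of_forall_notMem ?_
  rintro l ⟨hl, hlast⟩
  obtain ⟨c, hc, hjc⟩ := exists_le_of_mem_borelGens hl (List.mem_of_getLast? hlast)
  exact absurd (hI c hc) (by omega)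

theorem b_eq_sum_Icc {n k : ℕ} {I : List ℕ} (hkn : k ≤ n) (hI : ∀ x ∈ I, x ≤ k) (r : ℕ) :
    b n I r = ∑ j ∈ Icc 1 k, (j - 1).choose r * w I j := by
  refine (sum_subset (Icc_subset_Icc_right hkn) fun j hj hjk => ?_).symm
  rw [w_eq_zero_of_forall_le hI (by simp_all), mul_zero]

def borelGensLastLE (I : List ℕ) (j : ℕ) : Set (List ℕ) :=
  {l ∈ borelGens I | ∀ a ∈ l.getLast?, a ≤ j}

theorem w_append_singleton {I : List ℕ} {j k : ℕ} (hj : 1 ≤ j) (hjk : j ≤ k) :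
    w (I ++ [k]) j = (borelGensLastLE I j).ncard := by
  have himage :
      {l ∈ borelGens (I ++ [k]) | l.getLast? = some j} = (· ++ [j]) '' borelGensLastLE I j := by
    ext l
    simp only [Set.mem_ofPred_eq, List.getLast?_eq_some_iff, Set.mem_image, borelGensLastLE]
    constructor
    · rintro ⟨hl, l', rfl⟩
      obtain ⟨hl', hlast, -⟩ := append_singleton_mem_borelGens_append_singleton.1 hl
      exact ⟨l', ⟨hl', hlast⟩, rfl⟩
    · rintro ⟨l', ⟨hl', hlast⟩, rfl⟩
      exact ⟨append_singleton_mem_borelGens_append_singleton.2 ⟨hl', hlast, hj, hjk⟩, l', rfl⟩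
  rw [w, himage, Set.ncard_image_of_injective _ (List.append_left_injective [j])]

theorem ncard_borelGensLastLE_succ (I : List ℕ) (j : ℕ) :
    (borelGensLastLE I (j + 1)).ncard = (borelGensLastLE I j).ncard + w I (j + 1) := by
  have hsplit : borelGensLastLE I (j + 1) =
      borelGensLastLE I j ∪ {l ∈ borelGens I | l.getLast? = some (j + 1)} := by
    ext l
    simp only [borelGensLastLE, Set.mem_union, Set.mem_ofPred_eq, ← and_or_left]
    cases l.getLast? <;> simp [Nat.le_succ_iff]
  have hdisj : Disjoint (borelGensLastLE I j) {l ∈ borelGens I | l.getLast? = some (j + 1)} := by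
    refine Set.disjoint_left.2 ?_
    rintro l ⟨-, hle⟩ ⟨-, hlast⟩
    exact absurd (hle _ hlast) (by omega)
  rw [hsplit, Set.ncard_union_eq hdisj ((borelGens_finite I).subset fun l h => h.1)
    ((borelGens_finite I).subset fun l h => h.1), w]

theorem betti_recursion_general (n : ℕ) (I : List ℕ) (hI : I.Chain' (· ≤ ·))
    (hpos : ∀ x ∈ I, 1 ≤ x ∧ x ≤ n)
    (k : ℕ) (hk : I.getLast? = some k) (i : ℕ) (hi : 1 ≤ i) :
    b n I (i - 1) + b n I.dropLast i = Nat.choose k i * w I k := by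
  obtain ⟨r, rfl⟩ : ∃ r, i = r + 1 := ⟨i - 1, by omega⟩
  obtain ⟨I, rfl⟩ := List.getLast?_eq_some_iff.1 hk
  obtain ⟨hk1, hkn⟩ := hpos k (by simp)
  have hle : ∀ x ∈ I ++ [k], x ≤ k := by
    have := List.isChain_iff_pairwise.1 hI
    simp_all [List.pairwise_append, or_imp, forall_and]
  have hw : ∀ j ∈ Icc 1 k, w (I ++ [k]) j = (borelGensLastLE I j).ncard := fun j hj =>
    w_append_singleton (mem_Icc.1 hj).1 (mem_Icc.1 hj).2
  rw [List.dropLast_concat, Nat.add_sub_cancel, b_eq_sum_Icc hkn hle,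
    b_eq_sum_Icc hkn fun x hx => hle x (by simp [hx]), ← sum_add_distrib,
    hw k (by simp [hk1]), sum_congr rfl fun j hj => by rw [hw j hj]]
  exact sum_Icc_choose_mul_add_choose_mul (ncard_borelGensLastLE_succ I) r k

/-- Recursion for Betti numbers of principal Borel ideals:
`b_{i-1}(Borel(m)) + b_i(Borel(m/x_k)) = binom(k, i)·w_k(Borel(m))`,
where `x_k = max(m)`. -/
theorem betti_recursion (n : ℕ) (I : List ℕ) (hI : I.Chain' (· ≤ ·))
    (hpos : ∀ x ∈ I, 1 ≤ x ∧ x ≤ n) (hne : I ≠ [])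
    (k : ℕ) (hk : I.getLast? = some k) (i : ℕ) (hi : 1 ≤ i) :
    b n I (i - 1) + b n I.dropLast i = Nat.choose k i * w I k :=
  betti_recursion_general n I hI hpos k hk i hi
end

section
/- Let B = Borel(m) be a principal Borel ideal with m = x_{i_1}⋯x_{i_s} in weakly increasing factorization, and for 0 ≤ d ≤ s−1 let c_d be the number of weakly increasing sequences (a_1,…,a_d) with a_j ≤ i_j for all j (so c_0 = 1). Then the generating function counting monomials NOT in B satisfies: Σ_{u monomial, u ∉ Borel(m)} t^{deg u} = Σ_{d=0}^{s−1} c_d · t^d / (1−t)^{n−i_{d+1}} as formal power series. Equivalently, for each degree e, the number of degree-e monomials in x_1,…,x_n not in Borel(m) equals Σ_{d=0}^{min(e,s−1)} c_d · binom(e − d + n − i_{d+1} − 1, n − i_{d+1} − 1). -/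
/-!
A weakly increasing list `l` of length `e` fails to lie in `Borel(m)` exactly when, for some `j`,
fewer than `j + 1` of its entries are `≤ i_{j+1}`; for sorted `l` this says `l_{j+1} > i_{j+1}`
(or `l` is too short). Cutting `l` at the first such index `d` writes it uniquely as `p ++ q`,
where `p` is one of the `c_d` generators of `trunc_d(Borel(m))` and `q` is any weakly increasing
list of `e - d` entries in `(i_{d+1}, n]`; there are `multichoose (n - i_{d+1}) (e - d)` of those.
-/

/-- `c I d`: the number of weakly increasing sequences `(a_1,…,a_d)` of
positive integers with `a_j ≤ i_j` for all `j` (the degree-`d` minimal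
generators of the `d`-truncation of `Borel(m)`, where `I` is the weakly
increasing factorization of `m`).  Note `c I 0 = 1`. -/
noncomputable def c (I : List ℕ) (d : ℕ) : ℕ :=
  Set.ncard {l : List ℕ | l.length = d ∧ l.Chain' (· ≤ ·) ∧
    ∀ t < d, 1 ≤ l.getD t 0 ∧ l.getD t 0 ≤ I.getD t 0}

namespace List

variable {α : Type*} [LinearOrder α] {l : List α} {j : ℕ}

theorem SortedLE.getElem_le_of_mem_drop (hl : l.SortedLE) (hj : j < l.length) {x : α}
    (hx : x ∈ l.drop j) : l[j] ≤ x := by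
  obtain ⟨i, hi, rfl⟩ := mem_drop_iff_getElem.1 hx
  exact hl.getElem_le_getElem_of_le (Nat.le_add_right j i)

theorem SortedLE.le_getElem_of_mem_take (hl : l.SortedLE) (hj : j < l.length) {x : α}
    (hx : x ∈ l.take (j + 1)) : x ≤ l[j] := by
  obtain ⟨i, hi, rfl⟩ := mem_take_iff_getElem.1 hx
  exact hl.getElem_le_getElem_of_le (by omega)

theorem SortedLE.lt_countP_le_iff (hl : l.SortedLE) (hj : j < l.length) (v : α) :
    j < l.countP (· ≤ v) ↔ l[j] ≤ v := by
  constructor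
  · intro hcount
    by_contra! hv
    have hdrop : (l.drop j).countP (· ≤ v) = 0 :=
      countP_eq_zero.2 fun x hx => by simpa using hv.trans_le (hl.getElem_le_of_mem_drop hj hx)
    have htake : (l.take j).countP (· ≤ v) ≤ j := countP_le_length.trans (length_take_le _ _)
    rw [← take_append_drop j l, countP_append, hdrop] at hcount
    omega
  · intro hv
    calc j < (l.take (j + 1)).length := by simp [hj]
      _ = (l.take (j + 1)).countP (· ≤ v) := (countP_eq_length.2 fun x hx => by
            simpa using (hl.le_getElem_of_mem_take hj hx).trans hv).symm
      _ ≤ l.countP (· ≤ v) := (take_sublist _ _).countP_le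

end List

def sortedIoc (k a b : ℕ) : Set (List ℕ) :=
  {l | l.length = k ∧ l.IsChain (· ≤ ·) ∧ ∀ x ∈ l, x ∈ Set.Ioc a b}

def sortedListing {k a b : ℕ} (s : Sym (Set.Ioc a b) k) : List ℕ :=
  ((s : Multiset (Set.Ioc a b)).map Subtype.val).sort

lemma sortedListing_injective (k a b : ℕ) : Function.Injective (@sortedListing k a b) := by
  intro s t hst
  have hcoe := congrArg (fun l : List ℕ => (l : Multiset ℕ)) hst
  simp only [sortedListing, Multiset.sort_eq] at hcoe
  exact Sym.coe_injective (Multiset.map_injective Subtype.val_injective hcoe)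

lemma range_sortedListing (k a b : ℕ) : Set.range (@sortedListing k a b) = sortedIoc k a b := by
  ext l
  constructor
  · rintro ⟨s, rfl⟩
    refine ⟨by simp [sortedListing], (Multiset.pairwise_sort _ _).sortedLE.isChain, ?_⟩
    intro x hx
    obtain ⟨y, -, rfl⟩ := Multiset.mem_map.1 ((Multiset.mem_sort _).1 hx)
    exact y.2
  · rintro ⟨hlen, hsorted, hmem⟩
    refine ⟨⟨((l.attach.map fun x => (⟨x.1, hmem x.1 x.2⟩ : Set.Ioc a b)) : Multiset _),
      by simp [hlen]⟩, ?_⟩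
    simp [sortedListing, Function.comp_def, List.mergeSort_eq_self _ hsorted.sortedLE.pairwise]

lemma ncard_sortedIoc (k a b : ℕ) : (sortedIoc k a b).ncard = (b - a).multichoose k := by
  rw [← range_sortedListing, Set.ncard_range_of_injective (sortedListing_injective k a b),
    Sym.natCard_sym_eq_multichoose, Nat.card_coe_set_eq, Set.ncard_Ioc_nat]

lemma finite_sortedIoc (k a b : ℕ) : (sortedIoc k a b).Finite :=
  range_sortedListing k a b ▸ Set.finite_range _

def MemBorel (I l : List ℕ) : Prop :=
  ∀ j < I.length, j + 1 ≤ l.countP (fun x => decide (x ≤ I.getD j 0))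

def nonBorel (n : ℕ) (I : List ℕ) (e : ℕ) : Set (List ℕ) :=
  {l | l.length = e ∧ l.IsChain (· ≤ ·) ∧ (∀ x ∈ l, x ∈ Set.Ioc 0 n) ∧
    ¬ MemBorel I l}

def dominatedSorted (I : List ℕ) (d : ℕ) : Set (List ℕ) :=
  {l | l.length = d ∧ l.IsChain (· ≤ ·) ∧
    ∀ t < d, 1 ≤ l.getD t 0 ∧ l.getD t 0 ≤ I.getD t 0}

/-- The non-Borel monomials whose first violated Borel condition is the `d`-th one: a generator
of `trunc_d(Borel(m))` times a monomial in the variables after `x_{i_{d+1}}`. -/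
def nonBorelStratum (n : ℕ) (I : List ℕ) (e d : ℕ) : Set (List ℕ) :=
  (fun pq : List ℕ × List ℕ => pq.1 ++ pq.2) ''
    (dominatedSorted I d ×ˢ sortedIoc (e - d) (I.getD d 0) n)

lemma ncard_nonBorelStratum (n : ℕ) (I : List ℕ) (e d : ℕ) :
    (nonBorelStratum n I e d).ncard = c I d * (n - I.getD d 0).multichoose (e - d) := by
  rw [nonBorelStratum, Set.InjOn.ncard_image, Set.ncard_prod, ncard_sortedIoc]
  · rfl
  rintro ⟨p, q⟩ ⟨⟨hp, -⟩, -⟩ ⟨p', q'⟩ ⟨⟨hp', -⟩, -⟩ happ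
  obtain ⟨rfl, rfl⟩ := List.append_inj happ (hp.trans hp'.symm)
  rfl

lemma nonBorelStratum_subset {n : ℕ} {I : List ℕ} {e d : ℕ} (hI : I.SortedLE)
    (hIn : ∀ x ∈ I, x ≤ n) (hdI : d < I.length) (hde : d ≤ e) :
    nonBorelStratum n I e d ⊆ nonBorel n I e := by
  rintro _ ⟨⟨p, q⟩, ⟨⟨hp, hpc, hpI⟩, hq, hqc, hqI⟩, rfl⟩
  dsimp only at hp hpc hpI hq hqc hqI ⊢
  have hIdn : I.getD d 0 ≤ n := by
    rw [List.getD_eq_getElem _ _ hdI]; exact hIn _ (List.getElem_mem hdI)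
  have hpd : ∀ x ∈ p, x ∈ Set.Ioc 0 (I.getD d 0) := by
    intro x hx
    obtain ⟨t, ht, rfl⟩ := List.mem_iff_getElem.1 hx
    have hpt := hpI t (hp ▸ ht)
    have hIt : I.getD t 0 ≤ I.getD d 0 := by
      rw [List.getD_eq_getElem _ _ hdI, List.getD_eq_getElem _ _ (by omega)]
      exact hI.getElem_le_getElem_of_le (by omega)
    rw [List.getD_eq_getElem _ _ ht] at hpt
    exact ⟨hpt.1, hpt.2.trans hIt⟩
  refine ⟨by simp [hp, hq]; omega, ?_, ?_, fun hB => ?_⟩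
  · exact List.isChain_iff_pairwise.2 (List.pairwise_append.2 ⟨List.isChain_iff_pairwise.1 hpc,
      List.isChain_iff_pairwise.1 hqc, fun x hx y hy => (hpd x hx).2.trans (hqI y hy).1.le⟩)
  · intro x hx
    rcases List.mem_append.1 hx with hx | hx
    · exact ⟨(hpd x hx).1, (hpd x hx).2.trans hIdn⟩
    · exact ⟨(Nat.zero_le _).trans_lt (hqI x hx).1, (hqI x hx).2⟩
  · have hcount := hB d hdI
    rw [List.countP_append, List.countP_eq_length.2 (fun x hx => by simpa using (hpd x hx).2),
      List.countP_eq_zero.2 (fun x hx => by simpa using (hqI x hx).1)] at hcount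
    omega

lemma exists_mem_nonBorelStratum {n : ℕ} {I : List ℕ} {e : ℕ} {l : List ℕ}
    (hl : l ∈ nonBorel n I e) :
    ∃ d ≤ min e (I.length - 1), l ∈ nonBorelStratum n I e d := by
  obtain ⟨hlen, hchain, hbound, hnot⟩ := hl
  have hsorted := hchain.sortedLE
  obtain ⟨j₀, hj₀, hfail⟩ : ∃ j < I.length, l.countP (· ≤ I.getD j 0) ≤ j := by
    simpa [MemBorel] using hnot
  have hex : ∃ j, l.countP (· ≤ I.getD j 0) ≤ j := ⟨j₀, hfail⟩
  set d := Nat.find hex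
  have hde : d ≤ e := Nat.find_min' hex (hlen ▸ List.countP_le_length)
  have hdj₀ : d ≤ j₀ := Nat.find_min' hex hfail
  refine ⟨d, le_min hde (by omega), (l.take d, l.drop d),
    ⟨⟨?_, hchain.take d, ?_⟩, ?_, hchain.drop d, ?_⟩, List.take_append_drop d l⟩
  · simp [hlen, hde]
  · intro t ht
    have htl : t < l.length := by omega
    have hpass : t < l.countP (· ≤ I.getD t 0) := not_le.1 (Nat.find_min hex ht)
    rw [List.getD_eq_getElem _ _ (by simp [htl, ht]), List.getElem_take]
    exact ⟨(hbound _ (List.getElem_mem htl)).1, (hsorted.lt_countP_le_iff htl _).1 hpass⟩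
  · simp [hlen]
  · intro x hx
    have hdl : d < l.length := by
      by_contra! h; simp [List.drop_eq_nil_of_le h] at hx
    have hd : I.getD d 0 < l[d] :=
      not_le.1 fun h => (Nat.find_spec hex).not_gt ((hsorted.lt_countP_le_iff hdl _).2 h)
    exact ⟨hd.trans_le (hsorted.getElem_le_of_mem_drop hdl hx),
      (hbound x (List.mem_of_mem_drop hx)).2⟩

lemma pairwiseDisjoint_nonBorelStratum (n : ℕ) (I : List ℕ) (e : ℕ) :
    (Set.Iic e).PairwiseDisjoint (nonBorelStratum n I e) := by
  suffices h : ∀ d d', d < d' → d' ≤ e →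
      Disjoint (nonBorelStratum n I e d) (nonBorelStratum n I e d') by
    intro d hd d' hd' hne
    rcases lt_or_gt_of_ne hne with hlt | hlt
    · exact h d d' hlt hd'
    · exact (h d' d hlt hd).symm
  intro d d' hdd' hd'e
  rw [Set.disjoint_left]
  rintro _ ⟨⟨p, q⟩, ⟨⟨hp, -⟩, hq, -, hqI⟩, rfl⟩
    ⟨⟨p', q'⟩, ⟨⟨hp', -, hp'I⟩, -⟩, happ⟩
  dsimp only at hp hq hqI hp' hp'I happ
  have hq0 : q ≠ [] := by rintro rfl; simp at hq; omega
  have hbig : I.getD d 0 < (p ++ q).getD d 0 := by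
    rw [List.getD_append_right _ _ _ _ hp.le, hp, Nat.sub_self,
      List.getD_eq_getElem _ _ (List.length_pos_iff.2 hq0)]
    exact (hqI _ (List.getElem_mem _)).1
  have hsmall : (p' ++ q').getD d 0 ≤ I.getD d 0 := by
    rw [List.getD_append _ _ _ _ (hp' ▸ hdd')]
    exact (hp'I d hdd').2
  rw [← happ] at hbig
  omega

lemma multichoose_sub_eq_ite {a n d e : ℕ} (ha : a ≤ n) (hd : d ≤ e) :
    (n - a).multichoose (e - d) = if a = n then (if e = d then 1 else 0)
      else (e - d + (n - a) - 1).choose (n - a - 1) := by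
  split_ifs with han hed
  · simp [han, hed]
  · obtain ⟨k, hk⟩ : ∃ k, e - d = k + 1 := ⟨e - d - 1, by omega⟩
    rw [han, Nat.sub_self, hk, Nat.multichoose_zero_succ]
  · rw [Nat.multichoose_eq, add_comm (n - a)]
    exact Nat.choose_symm_of_eq_add (by omega)

lemma le_and_lt_length_of_mem_range {I : List ℕ} {e d : ℕ} (hne : I ≠ [])
    (hd : d ∈ Finset.range (min e (I.length - 1) + 1)) : d ≤ e ∧ d < I.length := by
  have := Finset.mem_range_succ_iff.1 hd
  have := List.length_pos_iff.2 hne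
  omega

lemma ncard_nonBorel {n : ℕ} {I : List ℕ} {e : ℕ} (hI : I.SortedLE)
    (hIn : ∀ x ∈ I, x ≤ n) (hne : I ≠ []) :
    (nonBorel n I e).ncard =
      ∑ d ∈ Finset.range (min e (I.length - 1) + 1), (nonBorelStratum n I e d).ncard := by
  have hrange : ∀ d ∈ Finset.range (min e (I.length - 1) + 1), d ≤ e ∧ d < I.length :=
    fun d => le_and_lt_length_of_mem_range hne
  have hstrata : ∀ d ∈ Finset.range (min e (I.length - 1) + 1),
      nonBorelStratum n I e d ⊆ nonBorel n I e :=
    fun d hd => nonBorelStratum_subset hI hIn (hrange d hd).2 (hrange d hd).1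
  have hcover : nonBorel n I e =
      ⋃ d ∈ (Finset.range (min e (I.length - 1) + 1) : Set ℕ), nonBorelStratum n I e d := by
    refine subset_antisymm (fun l hl => ?_) (Set.iUnion₂_subset hstrata)
    obtain ⟨d, hd, hl⟩ := exists_mem_nonBorelStratum hl
    exact Set.mem_biUnion (Finset.mem_coe.2 (Finset.mem_range_succ_iff.2 hd)) hl
  rw [hcover, (Finset.finite_toSet _).ncard_biUnion, finsum_mem_coe_finset]
  · exact fun d hd => (finite_sortedIoc e 0 n).subset
      ((hstrata d hd).trans fun l hl => ⟨hl.1, hl.2.1, hl.2.2.1⟩)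
  · exact (pairwiseDisjoint_nonBorelStratum n I e).subset fun d hd => (hrange d hd).1

/-- Hilbert function of `S/Borel(m)`: the number of degree-`e` monomials in
`x_1,…,x_n` not in `Borel(m)` (a monomial is in `Borel(m)` iff for each
`j ≤ s` it has at least `j` entries `≤ i_j`) equals
`Σ_{d=0}^{min(e,s-1)} c_d · binom(e-d+n-i_{d+1}-1, n-i_{d+1}-1)`, where when
`n = i_{d+1}` the `d`-th summand contributes `c_d` exactly in degree `e = d`. -/
theorem hilbert_function_principal_borel (n : ℕ) (I : List ℕ)
    (hI : I.Chain' (· ≤ ·)) (hpos : ∀ x ∈ I, 1 ≤ x ∧ x ≤ n) (hne : I ≠ [])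
    (e : ℕ) :
    Set.ncard {l : List ℕ | l.length = e ∧ l.Chain' (· ≤ ·) ∧
      (∀ x ∈ l, 1 ≤ x ∧ x ≤ n) ∧
      ¬ (∀ j < I.length, j + 1 ≤ l.countP (fun x => decide (x ≤ I.getD j 0)))} =
    ∑ d ∈ Finset.range (min e (I.length - 1) + 1),
      c I d * (if I.getD d 0 = n then (if e = d then 1 else 0)
               else Nat.choose (e - d + (n - I.getD d 0) - 1) ((n - I.getD d 0) - 1)) := by
  have hIn : ∀ x ∈ I, x ≤ n := fun x hx => (hpos x hx).2
  change (nonBorel n I e).ncard = _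
  rw [ncard_nonBorel hI.sortedLE hIn hne]
  refine Finset.sum_congr rfl fun d hd => ?_
  obtain ⟨hde, hdI⟩ := le_and_lt_length_of_mem_range hne hd
  have hIdn : I.getD d 0 ≤ n :=
    (List.getD_eq_getElem _ _ hdI).trans_le (hIn _ (List.getElem_mem hdI))
  rw [ncard_nonBorelStratum, multichoose_sub_eq_ite hIdn hde]
end
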